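/- Let 0 < q < 1. On K = ℓ²(ℤ≥0)⊗ℓ²(ℤ≥0), with z₁₁ = q^{-1} C₄S ⊗ S*C₂S*C₂ + e^{iφ} I⊗D², z₂₁ = −q^{-1} C₄S ⊗ S*C₂D + e^{iφ} I⊗C₂SD, z₂₂ = q C₄S ⊗ D² + e^{iφ} I⊗C₂SC₂S, one has z₁₁* Ω = e^{−iφ} Ω, z₂₁* Ω = 0, z₂₂* Ω = 0 for Ω = e₀⊗e₀. -/

import Mathlib

/-!
The `(j, k)` coordinate of `z* Ω` is the conjugate of the `Ω` coordinate of `z (e_j ⊗ e_k)`.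
Every term of `z₂₁` and `z₂₂` raises one of the two indices, so never reaches `Ω`; the only term
of `z₁₁` that does is `e^{iφ} q^{2k} e_j ⊗ e_k` at `(j, k) = (0, 0)`, since `C₄S` raises `j`.
-/

noncomputable section
open ContinuousLinearMap Complex

/-- ℓ²(ℤ≥0) ⊗ ℓ²(ℤ≥0), realized as ℓ²(ℤ≥0 × ℤ≥0) -/
abbrev K : Type := lp (fun _ : ℕ × ℕ => ℂ) 2

/-- the orthonormal basis vector e_j ⊗ e_k -/
def E (j k : ℕ) : K := lp.single 2 (j, k) 1

theorem lp.adjoint_single_eq {ι 𝕜 : Type*} [DecidableEq ι] [RCLike 𝕜]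
    (z : lp (fun _ : ι => 𝕜) 2 →L[𝕜] lp (fun _ : ι => 𝕜) 2) (i : ι) (v : lp (fun _ : ι => 𝕜) 2)
    (hv : ∀ j, z (lp.single 2 j 1) i = star (v j)) :
    adjoint z (lp.single 2 i 1) = v := by
  ext j
  have h := adjoint_inner_right z (lp.single 2 j 1) (lp.single 2 i 1)
  simp only [lp.inner_single_left, lp.inner_single_right, map_one, one_mul, mul_one,
    RCLike.inner_apply] at h
  rw [h, hv, RCLike.star_def, RCLike.conj_conj]

theorem E_apply (j k a b : ℕ) : E j k (a, b) = if a = j ∧ b = k then 1 else 0 := by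
  simp [E, lp.single_apply, Pi.single_apply]

theorem adjoint_E_zero_zero_eq (z : K →L[ℂ] K) (v : K)
    (hv : ∀ j k, z (E j k) (0, 0) = star (v (j, k))) : adjoint z (E 0 0) = v :=
  lp.adjoint_single_eq z (0, 0) v fun ⟨j, k⟩ => hv j k

theorem stmt12_general (q : ℝ) (φ : ℝ)
    (z11 z21 z22 : K →L[ℂ] K)
    (hz11 : ∀ j k : ℕ, z11 (E j k)
      = (((q⁻¹ * Real.sqrt (1 - q ^ (4 * (j + 1))) * Real.sqrt (1 - q ^ (2 * k))
            * Real.sqrt (1 - q ^ (2 * (k - 1)))) : ℝ) : ℂ) • E (j + 1) (k - 2)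
        + (Complex.exp (φ * Complex.I) * ((q ^ (2 * k) : ℝ) : ℂ)) • E j k)
    (hz21 : ∀ j k : ℕ, z21 (E j k)
      = -(((q⁻¹ * Real.sqrt (1 - q ^ (4 * (j + 1))) * q ^ k
            * Real.sqrt (1 - q ^ (2 * k))) : ℝ) : ℂ) • E (j + 1) (k - 1)
        + (Complex.exp (φ * Complex.I)
            * ((q ^ k * Real.sqrt (1 - q ^ (2 * (k + 1))) : ℝ) : ℂ)) • E j (k + 1))
    (hz22 : ∀ j k : ℕ, z22 (E j k)
      = (((q * Real.sqrt (1 - q ^ (4 * (j + 1))) * q ^ (2 * k)) : ℝ) : ℂ) • E (j + 1) k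
        + (Complex.exp (φ * Complex.I)
            * ((Real.sqrt (1 - q ^ (2 * (k + 1)))
                * Real.sqrt (1 - q ^ (2 * (k + 2))) : ℝ) : ℂ)) • E j (k + 2)) :
    adjoint z11 (E 0 0) = Complex.exp (-(φ * Complex.I)) • E 0 0
    ∧ adjoint z21 (E 0 0) = 0
    ∧ adjoint z22 (E 0 0) = 0 := by
  refine ⟨adjoint_E_zero_zero_eq _ _ fun j k => ?_, adjoint_E_zero_zero_eq _ _ fun j k => ?_,
    adjoint_E_zero_zero_eq _ _ fun j k => ?_⟩ <;>
  simp only [hz11, hz21, hz22, lp.coeFn_add, lp.coeFn_smul, lp.coeFn_zero, Pi.add_apply,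
    Pi.smul_apply, Pi.zero_apply, E_apply, smul_eq_mul]
  · by_cases h : j = 0 ∧ k = 0
    · simp [h, ← Complex.exp_conj]
    · simp [h, eq_comm]
  · simp
  · simp

/-- The generators z₁₁ = q⁻¹ C₄S ⊗ S*C₂S*C₂ + e^{iφ} I⊗D²,
z₂₁ = −q⁻¹ C₄S ⊗ S*C₂D + e^{iφ} I⊗C₂SD, z₂₂ = q C₄S ⊗ D² + e^{iφ} I⊗C₂SC₂S of the
representation (ℱ_φ ⊗ π₀)∘𝒟, described by their action on the basis e_j ⊗ e_k,
satisfy z₁₁* Ω = e^{−iφ} Ω, z₂₁* Ω = 0, z₂₂* Ω = 0 for Ω = e₀⊗e₀. -/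
theorem stmt12 (q : ℝ) (hq : 0 < q) (hq1 : q < 1) (φ : ℝ)
    (z11 z21 z22 : K →L[ℂ] K)
    (hz11 : ∀ j k : ℕ, z11 (E j k)
      = (((q⁻¹ * Real.sqrt (1 - q ^ (4 * (j + 1))) * Real.sqrt (1 - q ^ (2 * k))
            * Real.sqrt (1 - q ^ (2 * (k - 1)))) : ℝ) : ℂ) • E (j + 1) (k - 2)
        + (Complex.exp (φ * Complex.I) * ((q ^ (2 * k) : ℝ) : ℂ)) • E j k)
    (hz21 : ∀ j k : ℕ, z21 (E j k)
      = -(((q⁻¹ * Real.sqrt (1 - q ^ (4 * (j + 1))) * q ^ k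
            * Real.sqrt (1 - q ^ (2 * k))) : ℝ) : ℂ) • E (j + 1) (k - 1)
        + (Complex.exp (φ * Complex.I)
            * ((q ^ k * Real.sqrt (1 - q ^ (2 * (k + 1))) : ℝ) : ℂ)) • E j (k + 1))
    (hz22 : ∀ j k : ℕ, z22 (E j k)
      = (((q * Real.sqrt (1 - q ^ (4 * (j + 1))) * q ^ (2 * k)) : ℝ) : ℂ) • E (j + 1) k
        + (Complex.exp (φ * Complex.I)
            * ((Real.sqrt (1 - q ^ (2 * (k + 1)))
                * Real.sqrt (1 - q ^ (2 * (k + 2))) : ℝ) : ℂ)) • E j (k + 2)) :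
    adjoint z11 (E 0 0) = Complex.exp (-(φ * Complex.I)) • E 0 0
    ∧ adjoint z21 (E 0 0) = 0
    ∧ adjoint z22 (E 0 0) = 0 :=
  stmt12_general q φ z11 z21 z22 hz11 hz21 hz22
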